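/- arXiv:1712.00973 — 4 statements merged into one kernel-verified Lean document; each statement's English description precedes it below -/
import Mathlib

section
/- Let P ∈ M_{p×m}(ℤ_{≥0}), let B₁ be an n×n skew-symmetrizable integer matrix, and let B₂ ∈ M_{m×n}(ℤ) be column sign-coherent. Then for each 1 ≤ k ≤ n, mutating the stacked matrix with lower part PB₂ equals applying the block-diagonal matrix diag(I_n, P) to the mutation of the stacked matrix with lower part B₂: μ_k([B₁; PB₂]) = diag(I_n, P) · μ_k([B₁; B₂]). -/
/-- Mutation in direction `k` of an `(n+m) × n` integer matrix, rows indexed by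
`Fin n ⊕ Fin m` (the principal part is the `Sum.inl` block). -/
def mutate {n m : ℕ} (k : Fin n) (B : Matrix (Fin n ⊕ Fin m) (Fin n) ℤ) :
    Matrix (Fin n ⊕ Fin m) (Fin n) ℤ :=
  fun i j =>
    if i = Sum.inl k ∨ j = k then -B i j
    else B i j + Int.sign (B i k) * max (B i k * B (Sum.inl k) j) 0

/-- A matrix is column sign-coherent if any two entries in the same column
have product ≥ 0 (i.e. any two nonzero entries in a column share the same sign). -/
def ColSgnCoh {m n : ℕ} (A : Matrix (Fin m) (Fin n) ℤ) : Prop :=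
  ∀ (i i' : Fin m) (j : Fin n), 0 ≤ A i j * A i' j

/-!
If every entry of column `k` of the lower block has the sign `ε = ±1` (or vanishes), the
piecewise rule `sgn(x) · max(x c, 0)` equals `x · max(ε c, 0)`, which is linear in `x`. So on
such matrices the mutation of the lower block is right multiplication by one fixed matrix,
determined by `k`, `ε` and the `k`-th row of `B₁`. Left multiplication by a nonnegative `P`
keeps column `k` of `B₂` of sign `ε`, and the identity follows by associativity.
-/

open Matrix

lemma Int.sign_mul_max_mul_zero_eq (ε : ℤˣ) {x : ℤ} (hx : 0 ≤ ε * x) (c : ℤ) :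
    x.sign * max (x * c) 0 = x * max (ε * c) 0 := by
  rcases Int.units_eq_one_or ε with rfl | rfl
  · rcases (one_mul x ▸ hx).eq_or_lt with rfl | hpos
    · simp
    · simp [Int.sign_eq_one_of_pos hpos, mul_max_of_nonneg _ _ hpos.le]
  · have hneg : x ≤ 0 := by simpa using hx
    rcases hneg.eq_or_lt with rfl | hneg
    · simp
    · have h := mul_max_of_nonneg (-c) 0 (neg_nonneg.mpr hneg.le)
      rw [mul_zero, neg_mul_neg] at h
      rw [Int.sign_eq_neg_one_of_neg hneg, ← h]
      simp

lemma ColSgnCoh.exists_unit_mul_nonneg {m n : ℕ} {A : Matrix (Fin m) (Fin n) ℤ}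
    (hA : ColSgnCoh A) (j : Fin n) : ∃ ε : ℤˣ, ∀ i, 0 ≤ ε * A i j := by
  by_cases hnonneg : ∀ i, 0 ≤ A i j
  · exact ⟨1, by simpa using hnonneg⟩
  · obtain ⟨i₀, hi₀⟩ := not_forall.mp hnonneg
    refine ⟨-1, fun i => ?_⟩
    have := hA i i₀ j
    simp only [Units.val_neg, Units.val_one, neg_one_mul, neg_nonneg]
    nlinarith

lemma units_mul_mul_apply_nonneg {ι κ ν : Type*} [Fintype κ] (ε : ℤˣ)
    {P : Matrix ι κ ℤ} (hP : ∀ i l, 0 ≤ P i l) {C : Matrix κ ν ℤ} {j : ν}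
    (hC : ∀ l, 0 ≤ ε * C l j) (i : ι) : 0 ≤ ε * (P * C) i j := by
  rw [mul_apply, Finset.mul_sum]
  refine Finset.sum_nonneg fun l _ => ?_
  rw [mul_left_comm]
  exact mul_nonneg (hP i l) (hC l)

def mutationMatrix {n : ℕ} (k : Fin n) (ε : ℤ) (b : Fin n → ℤ) : Matrix (Fin n) (Fin n) ℤ :=
  of fun i j =>
    if j = k then -(if i = k then 1 else 0)
    else (if i = j then 1 else 0) + (if i = k then max (ε * b j) 0 else 0)

section Mutation

variable {n m : ℕ} (k : Fin n) (B₁ : Matrix (Fin n) (Fin n) ℤ)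

lemma toRows₁_mutate_fromRows {m' : ℕ} (C : Matrix (Fin m) (Fin n) ℤ)
    (C' : Matrix (Fin m') (Fin n) ℤ) :
    (mutate k (fromRows B₁ C)).toRows₁ = (mutate k (fromRows B₁ C')).toRows₁ := by
  ext i j
  simp [mutate]

lemma toRows₂_mutate_fromRows {C : Matrix (Fin m) (Fin n) ℤ} {ε : ℤˣ}
    (hC : ∀ i, 0 ≤ ε * C i k) :
    (mutate k (fromRows B₁ C)).toRows₂ = C * mutationMatrix k ε (B₁ k) := by
  ext i j
  by_cases hj : j = k
  · subst hj
    simp [mutate, mutationMatrix, mul_apply]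
  · simp [mutate, mutationMatrix, mul_apply, hj, mul_add, Finset.sum_add_distrib,
      Int.sign_mul_max_mul_zero_eq ε (hC i)]

end Mutation

theorem mut_mul_nonneg_general {p m n : ℕ} (P : Matrix (Fin p) (Fin m) ℤ)
    (hP : ∀ i j, 0 ≤ P i j)
    (B₁ : Matrix (Fin n) (Fin n) ℤ)
    (B₂ : Matrix (Fin m) (Fin n) ℤ) (hB₂ : ColSgnCoh B₂)
    (k : Fin n) :
    mutate k (Matrix.fromRows B₁ (P * B₂)) =
      Matrix.fromBlocks (1 : Matrix (Fin n) (Fin n) ℤ) 0 0 P *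
        mutate k (Matrix.fromRows B₁ B₂) := by
  obtain ⟨ε, hε⟩ := hB₂.exists_unit_mul_nonneg k
  have hPε : ∀ i, 0 ≤ ε * (P * B₂) i k := units_mul_mul_apply_nonneg ε hP hε
  rw [← fromRows_toRows (mutate k (fromRows B₁ B₂)), fromBlocks_mul_fromRows,
    ← fromRows_toRows (mutate k (fromRows B₁ (P * B₂))),
    toRows₂_mutate_fromRows k B₁ hε, toRows₂_mutate_fromRows k B₁ hPε,
    toRows₁_mutate_fromRows k B₁ (P * B₂) B₂]
  simp [Matrix.mul_assoc]

theorem mut_mul_nonneg {p m n : ℕ} (P : Matrix (Fin p) (Fin m) ℤ)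
    (hP : ∀ i j, 0 ≤ P i j)
    (B₁ : Matrix (Fin n) (Fin n) ℤ)
    (S : Fin n → ℤ) (hS : ∀ i, 0 < S i)
    (hskew : ∀ i j, S i * B₁ i j = -(S j * B₁ j i))
    (B₂ : Matrix (Fin m) (Fin n) ℤ) (hB₂ : ColSgnCoh B₂)
    (k : Fin n) :
    mutate k (Matrix.fromRows B₁ (P * B₂)) =
      Matrix.fromBlocks (1 : Matrix (Fin n) (Fin n) ℤ) 0 0 P *
        mutate k (Matrix.fromRows B₁ B₂) :=
  mut_mul_nonneg_general P hP B₁ B₂ hB₂ k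
end

section
/- Let P ∈ M_{p×m}(ℤ_{≥0}) with p, m > 0, and let B₁ be an n×n skew-symmetrizable integer matrix. If B₂ ∈ M_{m×n}(ℤ) is uniformly column sign-coherent with respect to B₁, then PB₂ is uniformly column sign-coherent with respect to B₁. -/
/-- Apply a sequence of mutations `μ_{k_s} ⋯ μ_{k_1}` (the list is `[k_1, …, k_s]`). -/
def mutateSeq {n m : ℕ} (L : List (Fin n)) (B : Matrix (Fin n ⊕ Fin m) (Fin n) ℤ) :
    Matrix (Fin n ⊕ Fin m) (Fin n) ℤ :=
  L.foldl (fun M k => mutate k M) B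

/-- `B₂` is uniformly column sign-coherent with respect to `B₁` if the lower part of
any iterated mutation of the stacked matrix `[B₁; B₂]` is column sign-coherent. -/
def UColSgnCoh {n m : ℕ} (B₁ : Matrix (Fin n) (Fin n) ℤ)
    (B₂ : Matrix (Fin m) (Fin n) ℤ) : Prop :=
  ∀ L : List (Fin n),
    ColSgnCoh (fun (i : Fin m) (j : Fin n) =>
      mutateSeq L (Matrix.fromRows B₁ B₂) (Sum.inr i) j)

/-!
Multiplying the coefficient rows by `P ≥ 0` commutes with a mutation at `k` as soon as
column `k` of the coefficient rows is sign-coherent: the term `sgn(x) · max(x c, 0)` is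
linear in `x` on each half-line, and a nonnegative combination of same-sign entries keeps
that sign. Uniform sign-coherence of `B₂` provides this at every step, so the coefficient
rows of any mutation of `[B₁; P B₂]` are `P` times those of `[B₁; B₂]`, and `P ≥ 0`
preserves column sign-coherence.
-/

open Matrix

lemma ColSgnCoh.nonneg_or_nonpos {m n : ℕ} {A : Matrix (Fin m) (Fin n) ℤ} (hA : ColSgnCoh A)
    (j : Fin n) : (∀ i, 0 ≤ A i j) ∨ ∀ i, A i j ≤ 0 := by
  by_contra! h
  obtain ⟨⟨i, hi⟩, ⟨i', hi'⟩⟩ := h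
  nlinarith [hA i i' j]

lemma ColSgnCoh.nonneg_mul {p m n : ℕ} {P : Matrix (Fin p) (Fin m) ℤ} (hP : ∀ i j, 0 ≤ P i j)
    {A : Matrix (Fin m) (Fin n) ℤ} (hA : ColSgnCoh A) : ColSgnCoh (P * A) := by
  intro i i' j
  simp only [mul_apply]
  rcases hA.nonneg_or_nonpos j with hpos | hneg
  · exact mul_nonneg (Finset.sum_nonneg fun l _ => mul_nonneg (hP i l) (hpos l))
      (Finset.sum_nonneg fun l _ => mul_nonneg (hP i' l) (hpos l))
  · exact mul_nonneg_of_nonpos_of_nonpos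
      (Finset.sum_nonpos fun l _ => mul_nonpos_of_nonneg_of_nonpos (hP i l) (hneg l))
      (Finset.sum_nonpos fun l _ => mul_nonpos_of_nonneg_of_nonpos (hP i' l) (hneg l))

namespace Int

lemma sign_mul_max_mul_of_nonneg {x : ℤ} (hx : 0 ≤ x) (c : ℤ) :
    x.sign * max (x * c) 0 = x * max c 0 := by
  rcases hx.eq_or_lt with rfl | hx
  · simp
  · rw [sign_eq_one_of_pos hx, one_mul, mul_max_of_nonneg _ _ hx.le, mul_zero]

lemma sign_mul_max_mul_of_nonpos {x : ℤ} (hx : x ≤ 0) (c : ℤ) :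
    x.sign * max (x * c) 0 = x * max (-c) 0 := by
  have := sign_mul_max_mul_of_nonneg (neg_nonneg.mpr hx) (-c)
  rwa [sign_neg, neg_mul_neg, neg_mul, neg_mul, neg_inj] at this

lemma sign_mul_max_mul_sum {ι : Type*} (s : Finset ι) {w y : ι → ℤ} (hw : ∀ i ∈ s, 0 ≤ w i)
    (hy : (∀ i ∈ s, 0 ≤ y i) ∨ ∀ i ∈ s, y i ≤ 0) (c : ℤ) :
    (∑ i ∈ s, w i * y i).sign * max ((∑ i ∈ s, w i * y i) * c) 0 =
      ∑ i ∈ s, w i * ((y i).sign * max (y i * c) 0) := by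
  rcases hy with hpos | hneg
  · rw [sign_mul_max_mul_of_nonneg
      (Finset.sum_nonneg fun i hi => mul_nonneg (hw i hi) (hpos i hi)), Finset.sum_mul]
    refine Finset.sum_congr rfl fun i hi => ?_
    rw [sign_mul_max_mul_of_nonneg (hpos i hi), mul_assoc]
  · rw [sign_mul_max_mul_of_nonpos
      (Finset.sum_nonpos fun i hi => mul_nonpos_of_nonneg_of_nonpos (hw i hi) (hneg i hi)),
      Finset.sum_mul]
    refine Finset.sum_congr rfl fun i hi => ?_
    rw [sign_mul_max_mul_of_nonpos (hneg i hi), mul_assoc]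

end Int

section Mutation

variable {n m p : ℕ}

def mulLower (P : Matrix (Fin p) (Fin m) ℤ) (B : Matrix (Fin n ⊕ Fin m) (Fin n) ℤ) :
    Matrix (Fin n ⊕ Fin p) (Fin n) ℤ :=
  fromRows (toRows₁ B) (P * toRows₂ B)

lemma mulLower_fromRows (P : Matrix (Fin p) (Fin m) ℤ) (B₁ : Matrix (Fin n) (Fin n) ℤ)
    (B₂ : Matrix (Fin m) (Fin n) ℤ) : mulLower P (fromRows B₁ B₂) = fromRows B₁ (P * B₂) := by
  simp [mulLower]

lemma toRows₂_mulLower (P : Matrix (Fin p) (Fin m) ℤ) (B : Matrix (Fin n ⊕ Fin m) (Fin n) ℤ) :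
    toRows₂ (mulLower P B) = P * toRows₂ B := by
  simp [mulLower]

variable {P : Matrix (Fin p) (Fin m) ℤ}

lemma mutate_mulLower (hP : ∀ i j, 0 ≤ P i j) (k : Fin n)
    {B : Matrix (Fin n ⊕ Fin m) (Fin n) ℤ} (hB : ColSgnCoh (toRows₂ B)) :
    mutate k (mulLower P B) = mulLower P (mutate k B) := by
  ext (a | a) j
  · simp only [mutate, mulLower, fromRows_apply_inl, toRows₁_apply, Sum.inl.injEq]
  · simp only [mutate, mulLower, fromRows_apply_inl, fromRows_apply_inr, toRows₁_apply,
      toRows₂_apply, mul_apply, reduceCtorEq, false_or]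
    by_cases hjk : j = k
    · simp [hjk]
    · have hcol : (∀ l ∈ Finset.univ, 0 ≤ B (Sum.inr l) k) ∨
          ∀ l ∈ Finset.univ, B (Sum.inr l) k ≤ 0 := by
        simpa using hB.nonneg_or_nonpos k
      simp only [hjk, if_false, mul_add, Finset.sum_add_distrib,
        Int.sign_mul_max_mul_sum _ (fun l _ => hP a l) hcol]

lemma mutateSeq_mulLower (hP : ∀ i j, 0 ≤ P i j) (L : List (Fin n))
    {B : Matrix (Fin n ⊕ Fin m) (Fin n) ℤ} (hB : ∀ L', ColSgnCoh (toRows₂ (mutateSeq L' B))) :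
    mutateSeq L (mulLower P B) = mulLower P (mutateSeq L B) := by
  induction L generalizing B with
  | nil => rfl
  | cons k L ih =>
    change mutateSeq L (mutate k _) = mulLower P (mutateSeq L (mutate k B))
    rw [mutate_mulLower hP k (B := B) (hB [])]
    exact ih fun L' => hB (k :: L')

end Mutation

theorem uniform_colSgnCoh_mul_general {p m n : ℕ}
    (P : Matrix (Fin p) (Fin m) ℤ) (hP : ∀ i j, 0 ≤ P i j)
    (B₁ : Matrix (Fin n) (Fin n) ℤ)
    (B₂ : Matrix (Fin m) (Fin n) ℤ)
    (hB₂ : UColSgnCoh B₁ B₂) :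
    UColSgnCoh B₁ (P * B₂) := by
  intro L
  have hmut := mutateSeq_mulLower hP L (B := fromRows B₁ B₂) hB₂
  rw [mulLower_fromRows] at hmut
  change ColSgnCoh (toRows₂ (mutateSeq L (fromRows B₁ (P * B₂))))
  rw [hmut, toRows₂_mulLower]
  exact (hB₂ L).nonneg_mul hP

theorem uniform_colSgnCoh_mul {p m n : ℕ} (hp : 0 < p) (hm : 0 < m)
    (P : Matrix (Fin p) (Fin m) ℤ) (hP : ∀ i j, 0 ≤ P i j)
    (B₁ : Matrix (Fin n) (Fin n) ℤ)
    (S : Fin n → ℤ) (hS : ∀ i, 0 < S i)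
    (hskew : ∀ i j, S i * B₁ i j = -(S j * B₁ j i))
    (B₂ : Matrix (Fin m) (Fin n) ℤ)
    (hB₂ : UColSgnCoh B₁ B₂) :
    UColSgnCoh B₁ (P * B₂) :=
  uniform_colSgnCoh_mul_general P hP B₁ B₂ hB₂
end

section
/- Let B₁ be an n×n skew-symmetrizable integer matrix and B₂ an m×n column sign-coherent integer matrix. If rank(B₂) ≤ 1, then B₂ is uniformly column sign-coherent with respect to B₁. -/
open Matrix

lemma Int.sign_mul_mul_max_of_nonneg {x : ℤ} (hx : 0 ≤ x) (a b : ℤ) :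
    Int.sign (x * a) * max (x * a * b) 0 = x * (Int.sign a * max (a * b) 0) := by
  rcases hx.lt_or_eq with hx | rfl
  · have hmax : max (x * (a * b)) 0 = x * max (a * b) 0 := by
      rw [mul_max_of_nonneg _ _ hx.le, mul_zero]
    rw [Int.sign_mul, Int.sign_eq_one_of_pos hx, mul_assoc x a b, hmax]
    ring
  · simp

theorem Matrix.exists_eq_vecMulVec_of_rank_le_one {R m n : Type*} [CommRing R] [IsDomain R]
    [IsPrincipalIdealRing R] [Fintype m] [Fintype n] (A : Matrix m n R) (hA : A.rank ≤ 1) :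
    ∃ (u : m → R) (v : n → R), A = vecMulVec u v := by
  classical
  obtain ⟨g, hg⟩ := finrank_le_one_iff.mp hA
  have hcol (j : n) : ∃ c : R, c • (g : m → R) = A.col j := by
    obtain ⟨c, hc⟩ := hg ⟨A *ᵥ Pi.single j 1, _, rfl⟩
    exact ⟨c, by simpa [mulVec_single] using congrArg Subtype.val hc⟩
  choose v hv using hcol
  refine ⟨g, v, ?_⟩
  ext i j
  simpa [vecMulVec_apply, mul_comm] using (congrFun (hv j) i).symm

lemma ColSgnCoh.exists_nonneg_vecMulVec {m n : ℕ} {u : Fin m → ℤ} {v : Fin n → ℤ}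
    (h : ColSgnCoh (vecMulVec u v)) :
    ∃ (u' : Fin m → ℤ) (v' : Fin n → ℤ), 0 ≤ u' ∧ vecMulVec u v = vecMulVec u' v' := by
  by_cases hv : v = 0
  · exact ⟨0, v, le_rfl, by ext; simp [hv, vecMulVec_apply]⟩
  obtain ⟨j, hj⟩ := Function.ne_iff.mp hv
  have hu (i i' : Fin m) : 0 ≤ u i * u i' := by
    refine nonneg_of_mul_nonneg_left ?_ (mul_self_pos.mpr hj)
    simpa [vecMulVec_apply, mul_mul_mul_comm] using h i i' j
  by_cases hnn : 0 ≤ u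
  · exact ⟨u, v, hnn, rfl⟩
  obtain ⟨i₀, hi₀⟩ : ∃ i₀, u i₀ < 0 := by simpa [Pi.le_def] using hnn
  exact ⟨-u, -v, fun i => neg_nonneg.mpr (nonpos_of_mul_nonneg_left (hu i i₀) hi₀),
    by rw [neg_vecMulVec, vecMulVec_neg, neg_neg]⟩

lemma colSgnCoh_vecMulVec_of_nonneg {m n : ℕ} {u : Fin m → ℤ} (hu : 0 ≤ u) (v : Fin n → ℤ) :
    ColSgnCoh (vecMulVec u v) := by
  intro i i' j
  rw [vecMulVec_apply, vecMulVec_apply, mul_mul_mul_comm]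
  exact mul_nonneg (mul_nonneg (hu i) (hu i')) (mul_self_nonneg _)

section ScaleFrozenRows

variable {n m m' : ℕ} (f : Fin m → Fin m')

def scaleFrozenRows (u : Fin m → ℤ) (M : Matrix (Fin n ⊕ Fin m') (Fin n) ℤ) :
    Matrix (Fin n ⊕ Fin m) (Fin n) ℤ :=
  fromRows M.toRows₁ (of fun i j => u i * M (Sum.inr (f i)) j)

variable {u : Fin m → ℤ}

lemma mutate_scaleFrozenRows (hu : 0 ≤ u) (k : Fin n) (M : Matrix (Fin n ⊕ Fin m') (Fin n) ℤ) :
    mutate k (scaleFrozenRows f u M) = scaleFrozenRows f u (mutate k M) := by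
  ext (i | i) j
  · simp [scaleFrozenRows, mutate]
  · by_cases hj : j = k
    · simp [scaleFrozenRows, mutate, hj]
    · simp only [mutate, scaleFrozenRows, fromRows_apply_inl, fromRows_apply_inr, toRows₁_apply,
        of_apply, hj, reduceCtorEq, or_self, if_false]
      rw [Int.sign_mul_mul_max_of_nonneg (hu i)]
      ring

lemma mutateSeq_scaleFrozenRows (hu : 0 ≤ u) (L : List (Fin n))
    (M : Matrix (Fin n ⊕ Fin m') (Fin n) ℤ) :
    mutateSeq L (scaleFrozenRows f u M) = scaleFrozenRows f u (mutateSeq L M) := by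
  induction L generalizing M with
  | nil => rfl
  | cons k L ih =>
    change mutateSeq L (mutate k _) = scaleFrozenRows f u (mutateSeq L (mutate k M))
    rw [mutate_scaleFrozenRows f hu, ih]

end ScaleFrozenRows

lemma uColSgnCoh_vecMulVec_of_nonneg {m n : ℕ} (B₁ : Matrix (Fin n) (Fin n) ℤ)
    {u : Fin m → ℤ} (hu : 0 ≤ u) (v : Fin n → ℤ) : UColSgnCoh B₁ (vecMulVec u v) := by
  have hB : fromRows B₁ (vecMulVec u v) =
      scaleFrozenRows (fun _ => 0) u (fromRows B₁ (replicateRow (Fin 1) v)) := by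
    ext (i | i) j <;> simp [scaleFrozenRows, vecMulVec_apply]
  intro L
  rw [hB, mutateSeq_scaleFrozenRows _ hu]
  exact colSgnCoh_vecMulVec_of_nonneg hu _

theorem rank_le_one_uniform_colSgnCoh_general {m n : ℕ}
    (B₁ : Matrix (Fin n) (Fin n) ℤ)
    (B₂ : Matrix (Fin m) (Fin n) ℤ)
    (hB₂ : ColSgnCoh B₂) (hrank : B₂.rank ≤ 1) :
    UColSgnCoh B₁ B₂ := by
  obtain ⟨u₀, v₀, rfl⟩ := B₂.exists_eq_vecMulVec_of_rank_le_one hrank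
  obtain ⟨u, v, hu, huv⟩ := hB₂.exists_nonneg_vecMulVec
  rw [huv]
  exact uColSgnCoh_vecMulVec_of_nonneg B₁ hu v

/-- Every column sign-coherent integer matrix of rank at most one is uniformly
column sign-coherent with respect to any skew-symmetrizable matrix. -/
theorem rank_le_one_uniform_colSgnCoh {m n : ℕ}
    (B₁ : Matrix (Fin n) (Fin n) ℤ)
    (S : Fin n → ℤ) (hS : ∀ i, 0 < S i)
    (hskew : ∀ i j, S i * B₁ i j = -(S j * B₁ j i))
    (B₂ : Matrix (Fin m) (Fin n) ℤ)
    (hB₂ : ColSgnCoh B₂) (hrank : B₂.rank ≤ 1) :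
    UColSgnCoh B₁ B₂ :=
  rank_le_one_uniform_colSgnCoh_general B₁ B₂ hB₂ hrank
end

section
/- Let B = [[B₁, B₃],[B₂, B₄]] be an (n+m)×(n+m) skew-symmetrizable integer matrix (B₁ of size n×n, B₄ of size m×m). Then B₂ is uniformly column sign-coherent with respect to B₁ if and only if the block B₄ is invariant under every sequence of mutations μ_{k_s}⋯μ_{k_1} with all k_i ∈ {1,…,n}. -/
/-- Mutation in direction `k` of a square integer matrix indexed by `Fin n ⊕ Fin m`. -/
def mutS {n m : ℕ} (k : Fin n ⊕ Fin m)
    (B : Matrix (Fin n ⊕ Fin m) (Fin n ⊕ Fin m) ℤ) :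
    Matrix (Fin n ⊕ Fin m) (Fin n ⊕ Fin m) ℤ :=
  fun i j =>
    if i = k ∨ j = k then -B i j
    else B i j + Int.sign (B i k) * max (B i k * B k j) 0

/-- Skew-symmetrizability predicate. -/
def MSkew {ι : Type*} (S : ι → ℤ) (M : Matrix ι ι ℤ) : Prop :=
  ∀ i j, S i * M i j = -(S j * M j i)

lemma sign_max_key (si sj sk a a' b b' : ℤ) (hsi : 0 < si) (hsj : 0 < sj) (hsk : 0 < sk)
    (h1 : sk * b = -(sj * a')) (h2 : sk * b' = -(si * a)) :
    si * (Int.sign a * max (a * b) 0) = -(sj * (Int.sign a' * max (a' * b') 0)) := by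
  have hk : sk ≠ 0 := hsk.ne'
  apply mul_left_cancel₀ hk
  have e1 : sk * (a * b) = -(sj * (a * a')) := by
    rw [show sk * (a * b) = a * (sk * b) by ring, h1]; ring
  have e2 : sk * (a' * b') = -(si * (a * a')) := by
    rw [show sk * (a' * b') = a' * (sk * b') by ring, h2]; ring
  have m1 : sk * max (a * b) 0 = max (-(sj * (a * a'))) 0 := by
    rw [mul_max_of_nonneg _ _ hsk.le, e1, mul_zero]
  have m2 : sk * max (a' * b') 0 = max (-(si * (a * a'))) 0 := by
    rw [mul_max_of_nonneg _ _ hsk.le, e2, mul_zero]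
  have L1 : sk * (si * (Int.sign a * max (a * b) 0))
      = si * Int.sign a * (sk * max (a * b) 0) := by ring
  have L2 : sk * -(sj * (Int.sign a' * max (a' * b') 0))
      = -(sj * Int.sign a' * (sk * max (a' * b') 0)) := by ring
  rw [L1, L2, m1, m2]
  rcases le_or_gt 0 (a * a') with h | h
  · rw [max_eq_right (by nlinarith), max_eq_right (by nlinarith)]; ring
  · rw [max_eq_left (by nlinarith), max_eq_left (by nlinarith)]
    rcases mul_neg_iff.mp h with ⟨ha, ha'⟩ | ⟨ha, ha'⟩
    · rw [Int.sign_eq_one_of_pos ha, Int.sign_eq_neg_one_of_neg ha']; ring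
    · rw [Int.sign_eq_neg_one_of_neg ha, Int.sign_eq_one_of_pos ha']; ring

lemma mskew_mutS {n m : ℕ} {S : Fin n ⊕ Fin m → ℤ} (hS : ∀ i, 0 < S i)
    {M : Matrix (Fin n ⊕ Fin m) (Fin n ⊕ Fin m) ℤ} (hM : MSkew S M)
    (k : Fin n ⊕ Fin m) : MSkew S (mutS k M) := by
  intro i j
  unfold mutS
  by_cases h : i = k ∨ j = k
  · rw [if_pos h, if_pos h.symm]
    have := hM i j
    ring_nf
    linarith
  · have h' : ¬(j = k ∨ i = k) := fun hc => h hc.symm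
    rw [if_neg h, if_neg h']
    have key := sign_max_key (S i) (S j) (S k) (M i k) (M j k) (M k j) (M k i)
      (hS i) (hS j) (hS k) (hM k j) (hM k i)
    have hij := hM i j
    linear_combination hij + key

lemma mskew_foldl {n m : ℕ} {S : Fin n ⊕ Fin m → ℤ} (hS : ∀ i, 0 < S i)
    (L : List (Fin n)) :
    ∀ {M : Matrix (Fin n ⊕ Fin m) (Fin n ⊕ Fin m) ℤ}, MSkew S M →
      MSkew S (L.foldl (fun M k => mutS (Sum.inl k) M) M) := by
  induction L with
  | nil => intro M hM; exact hM
  | cons k L ih =>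
    intro M hM
    exact ih (mskew_mutS hS hM (Sum.inl k))

lemma left_foldl {n m : ℕ} (L : List (Fin n)) :
    ∀ (M : Matrix (Fin n ⊕ Fin m) (Fin n ⊕ Fin m) ℤ),
      (fun i j => (L.foldl (fun M k => mutS (Sum.inl k) M) M) i (Sum.inl j))
        = mutateSeq L (fun i j => M i (Sum.inl j)) := by
  induction L with
  | nil => intro M; rfl
  | cons k L ih =>
    intro M
    show (fun i j => (L.foldl (fun M k => mutS (Sum.inl k) M) (mutS (Sum.inl k) M)) i (Sum.inl j))
        = mutateSeq L (mutate k (fun i j => M i (Sum.inl j)))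
    rw [ih (mutS (Sum.inl k) M)]
    funext i j

    unfold mutS mutate
    simp only [Sum.inl.injEq]

lemma fromRows_left {n m : ℕ} (B : Matrix (Fin n ⊕ Fin m) (Fin n ⊕ Fin m) ℤ) :
    Matrix.fromRows (fun i j => B (Sum.inl i) (Sum.inl j))
        (fun i j => B (Sum.inr i) (Sum.inl j))
      = fun i j => B i (Sum.inl j) := by
  funext i j
  rcases i with a | a <;> rfl

lemma left_foldl' {n m : ℕ} (L : List (Fin n))
    (M : Matrix (Fin n ⊕ Fin m) (Fin n ⊕ Fin m) ℤ) (i : Fin n ⊕ Fin m) (j : Fin n) :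
    (L.foldl (fun M k => mutS (Sum.inl k) M) M) i (Sum.inl j)
      = mutateSeq L (fun i j => M i (Sum.inl j)) i j := by
  have := left_foldl L M
  exact congrFun (congrFun this i) j


/-- The bottom-left block `B₂` is uniformly column sign-coherent with respect to the
top-left block `B₁` iff the bottom-right block `B₄` is invariant under every sequence
of mutations in the first `n` directions. -/
theorem uniform_iff_block_invariant {n m : ℕ}
    (B : Matrix (Fin n ⊕ Fin m) (Fin n ⊕ Fin m) ℤ)
    (S : Fin n ⊕ Fin m → ℤ) (hS : ∀ i, 0 < S i)
    (hskew : ∀ i j, S i * B i j = -(S j * B j i)) :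
    UColSgnCoh (fun i j => B (Sum.inl i) (Sum.inl j))
        (fun i j => B (Sum.inr i) (Sum.inl j)) ↔
      (∀ L : List (Fin n), ∀ i j : Fin m,
        (L.foldl (fun M k => mutS (Sum.inl k) M) B) (Sum.inr i) (Sum.inr j) =
          B (Sum.inr i) (Sum.inr j)) := by
  constructor
  · intro hU L i j
    induction L using List.reverseRecOn with
    | nil => rfl
    | append_singleton L k ih =>
      rw [List.foldl_append, List.foldl_cons, List.foldl_nil]
      set M := L.foldl (fun M k => mutS (Sum.inl k) M) B with hMdef
      have hsM : MSkew S M := mskew_foldl hS L hskew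
      have hcol : 0 ≤ M (Sum.inr i) (Sum.inl k) * M (Sum.inr j) (Sum.inl k) := by
        have h0 := hU L i j k
        rw [fromRows_left] at h0
        simp only at h0
        rw [← left_foldl' L B, ← left_foldl' L B] at h0
        exact h0
      show mutS (Sum.inl k) M (Sum.inr i) (Sum.inr j) = _
      unfold mutS
      rw [if_neg (by simp)]
      have e : S (Sum.inl k) * (M (Sum.inr i) (Sum.inl k) * M (Sum.inl k) (Sum.inr j))
          = -(S (Sum.inr j) * (M (Sum.inr i) (Sum.inl k) * M (Sum.inr j) (Sum.inl k))) := by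
        linear_combination (M (Sum.inr i) (Sum.inl k)) * hsM (Sum.inl k) (Sum.inr j)
      have hle : M (Sum.inr i) (Sum.inl k) * M (Sum.inl k) (Sum.inr j) ≤ 0 := by
        nlinarith [hS (Sum.inl k), hS (Sum.inr j),
          mul_nonneg (hS (Sum.inr j)).le hcol]
      rw [max_eq_right hle, mul_zero, add_zero]
      exact ih
  · intro hInv L
    intro i i' j
    by_contra hne
    push_neg at hne
    rw [fromRows_left] at hne
    rw [← left_foldl' L B, ← left_foldl' L B] at hne
    set M := L.foldl (fun M k => mutS (Sum.inl k) M) B with hMdef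
    have hsM : MSkew S M := mskew_foldl hS L hskew
    set c := M (Sum.inr i) (Sum.inl j) with hc
    set c' := M (Sum.inr i') (Sum.inl j) with hc'
    set d := M (Sum.inl j) (Sum.inr i') with hd
    have hlt : c * c' < 0 := hne
    have e : S (Sum.inl j) * (c * d) = -(S (Sum.inr i') * (c * c')) := by
      linear_combination c * hsM (Sum.inl j) (Sum.inr i')
    have hpos : 0 < c * d := by
      nlinarith [hS (Sum.inl j), hS (Sum.inr i'),
        mul_neg_of_pos_of_neg (hS (Sum.inr i')) hlt]
    have hc0 : c ≠ 0 := by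
      intro h
      rw [h, zero_mul] at hlt
      exact lt_irrefl 0 hlt
    have key1 := hInv (L ++ [j]) i i'
    have key2 := hInv L i i'
    rw [List.foldl_append, List.foldl_cons, List.foldl_nil] at key1
    rw [← hMdef] at key1 key2
    unfold mutS at key1
    rw [if_neg (by simp)] at key1
    rw [max_eq_left hpos.le] at key1
    have hz : Int.sign c * (c * d) = 0 := by
      have : M (Sum.inr i) (Sum.inr i') + Int.sign c * (c * d)
          = M (Sum.inr i) (Sum.inr i') := by rw [key2] at key1 ⊢; linarith [key1]
      linarith
    have hsc : Int.sign c ≠ 0 := fun h => hc0 (Int.sign_eq_zero_iff_zero.mp h)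
    exact (mul_ne_zero hsc hpos.ne') hz
end
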